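/- arXiv:1606.04145 — 3 statements merged into one kernel-verified Lean document; each statement's English description precedes it below -/
import Mathlib

section
/- In the construction described in the context, if v^ℓ ∈ H, then the revenue of the λ-auction A_H on v^ℓ is at least 2 − 2γ. -/
open Finset MeasureTheory

/-- An `n`-bidder, `m`-item allocation: pairwise disjoint bundles of items. -/
def Alloc (n m : ℕ) : Type :=
  {o : Fin n → Finset (Fin m) // ∀ i j, i ≠ j → o i ∩ o j = ∅}

instance (n m : ℕ) : Inhabited (Alloc n m) :=
  ⟨⟨fun _ => ∅, fun _ _ _ => by simp⟩⟩

instance (n m : ℕ) : Fintype (Alloc n m) :=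
  Subtype.fintype _

instance (n m : ℕ) : Nonempty (Alloc n m) := ⟨default⟩

/-- Maximum of a real-valued function over all allocations. -/
noncomputable def allocMax {n m : ℕ} (f : Alloc n m → ℝ) : ℝ :=
  Finset.univ.sup' Finset.univ_nonempty f

/-- A fixed (canonical) maximizer of a real-valued function over all allocations. -/
noncomputable def chooseMax {n m : ℕ} (f : Alloc n m → ℝ) : Alloc n m :=
  Classical.choose (Finset.exists_max_image Finset.univ f Finset.univ_nonempty)

/-- `os` maximizes the boosted weighted social welfare. -/
def IsMaxAlloc {n m : ℕ} (w : Fin n → ℝ) (lam : Alloc n m → ℝ)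
    (v : Fin n → Finset (Fin m) → ℝ) (os : Alloc n m) : Prop :=
  ∀ o : Alloc n m, (∑ j, w j * v j (o.1 j)) + lam o ≤ (∑ j, w j * v j (os.1 j)) + lam os

/-- Revenue of the AMA with weights `w`, boosts `lam`, on valuations `v`, when the
chosen (welfare-maximizing) allocation is `os`. -/
noncomputable def amaRev {n m : ℕ} (w : Fin n → ℝ) (lam : Alloc n m → ℝ)
    (v : Fin n → Finset (Fin m) → ℝ) (os : Alloc n m) : ℝ :=
  ∑ j, (w j)⁻¹ *
    (allocMax (fun o => (∑ l ∈ Finset.univ.erase j, w l * v l (o.1 l)) + lam o)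
      - ((∑ l ∈ Finset.univ.erase j, w l * v l (os.1 l)) + lam os))

/-- The boosts of the `c`-MBA. -/
def mbaLam {n m : ℕ} (c : ℝ) : Alloc n m → ℝ :=
  fun o => if ∃ i, o.1 i = Finset.univ then c else 0

/-- Revenue of the `c`-MBA (with a fixed tie-breaking rule). -/
noncomputable def mbaRev {n m : ℕ} (v : Fin n → Finset (Fin m) → ℝ) (c : ℝ) : ℝ :=
  amaRev (fun _ => 1) (mbaLam c) v
    (chooseMax fun o => (∑ j, v j (o.1 j)) + mbaLam c o)

/-- Revenue of the MBARP with grand-bundle boost `c` and item reserve prices `r`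
(with a fixed tie-breaking rule); the seller participates as bidder `0`. -/
noncomputable def mbarpRev {n m : ℕ} (v : Fin n → Finset (Fin m) → ℝ) (c : ℝ)
    (r : Fin m → ℝ) : ℝ :=
  let vx : Fin (n + 1) → Finset (Fin m) → ℝ :=
    fun i b => Fin.cases (∑ j ∈ b, r j) (fun i' => v i' b) i
  let g : Fin (n + 1) → Alloc (n + 1) m → ℝ :=
    fun i o => (∑ l ∈ Finset.univ.erase i, vx l (o.1 l)) + mbaLam c o
  let os : Alloc (n + 1) m := chooseMax fun o => (∑ i, vx i (o.1 i)) + mbaLam c o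
  ∑ i : Fin n, (allocMax (g i.succ) - g i.succ os)

/-- Empirical Rademacher complexity of a class `F` on the sample `S`. -/
noncomputable def empRad {X : Type*} (F : Set (X → ℝ)) {N : ℕ} (S : Fin N → X) : ℝ :=
  ((2 : ℝ) ^ N)⁻¹ * ∑ σ : Fin N → Bool,
    ⨆ f ∈ F, (N : ℝ)⁻¹ * ∑ i, (if σ i then (1 : ℝ) else -1) * f (S i)

/-- Rademacher complexity: expected empirical Rademacher complexity over i.i.d. samples. -/
noncomputable def radComp {X : Type*} [MeasurableSpace X] (D : Measure X)
    (F : Set (X → ℝ)) (N : ℕ) : ℝ :=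
  ∫ S, empRad F S ∂(Measure.pi fun _ : Fin N => D)

/-- Pseudo-shattering of the tuple `x` by the class `F`, with witnesses `z`. -/
def PShatters {X : Type*} (F : Set (X → ℝ)) {k : ℕ} (x : Fin k → X) : Prop :=
  ∃ z : Fin k → ℝ, ∀ T : Finset (Fin k), ∃ f ∈ F,
    (∀ i, i ∈ T → f (x i) ≤ z i) ∧ (∀ i, i ∉ T → z i < f (x i))

/-- A valuation is additive if it is determined by its values on singletons. -/
def AdditiveVal {n m : ℕ} (v : Fin n → Finset (Fin m) → ℝ) : Prop :=
  ∀ i b, v i b = ∑ j ∈ b, v i {j}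

instance (n m : ℕ) : DecidableEq (Alloc n m) :=
  fun a b => decidable_of_iff (a.1 = b.1) Subtype.ext_iff.symm

/-- An allocation in which all `m` items are allocated and no single bidder
receives all the items. -/
def SpecialAlloc {n m : ℕ} (o : Alloc n m) : Prop :=
  (∀ j : Fin m, ∃ i, j ∈ o.1 i) ∧ ∀ i, o.1 i ≠ Finset.univ

/-- The additive valuation vector associated with the allocation `o`: bidder `i`
values item `j` at `1` exactly when `j` belongs to the bundle `o.1 i`. -/
def vOf {n m : ℕ} (o : Alloc n m) : Fin n → Finset (Fin m) → ℝ :=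
  fun i b => ((b ∩ o.1 i).card : ℝ)

/-!
On `v^õ` the welfare of an allocation `o` is the number of items that `o` gives to the
same bidder as `õ`; it is `m` at `õ` and at most `m - 1` elsewhere. Since every boost is
below `1` and `õ ∈ H` has boost `0`, the auction selects `õ`. As `õ` is special, at least
two bidders `j` receive a nonempty bundle, and deleting such a bundle leaves the others'
welfare unchanged while producing an allocation that misses an item, hence lies outside
`H` and carries the boost `1 - γ`. So each of these two bidders pays at least `1 - γ`,
and every payment is nonnegative.
-/

namespace Alloc

variable {n m : ℕ}

theorem sum_card_eq_of_covers (o : Alloc n m) (hcov : ∀ x, ∃ i, x ∈ o.1 i) :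
    ∑ i, (o.1 i).card = m := by
  have hdisj : (Set.univ : Set (Fin n)).PairwiseDisjoint o.1 := fun i _ j _ hij =>
    Finset.disjoint_iff_inter_eq_empty.2 (o.2 i j hij)
  have hunion : univ.biUnion o.1 = univ :=
    eq_univ_iff_forall.2 fun x => by simpa using hcov x
  calc ∑ i, (o.1 i).card = (univ.biUnion o.1).card := (card_biUnion (by simpa using hdisj)).symm
    _ = m := by rw [hunion, card_univ, Fintype.card_fin]

theorem eq_of_sum_card_inter_eq (o o' : Alloc n m) (hcov : ∀ x, ∃ i, x ∈ o'.1 i)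
    (h : ∑ i, (o.1 i ∩ o'.1 i).card = ∑ i, (o'.1 i).card) : o = o' := by
  have hsub : ∀ i, o'.1 i ⊆ o.1 i := fun i => by
    have hcard := (sum_eq_sum_iff_of_le fun i _ =>
      card_le_card (inter_subset_right (s₁ := o.1 i))).1 h i (mem_univ i)
    exact inter_eq_right.1 (eq_of_subset_of_card_le inter_subset_right hcard.ge)
  refine Subtype.ext (funext fun i => (Subset.antisymm ?_ (hsub i)))
  intro x hx
  obtain ⟨i', hx'⟩ := hcov x
  obtain rfl | hne := eq_or_ne i i'
  · exact hx'
  · have : x ∈ o.1 i ∩ o.1 i' := mem_inter.2 ⟨hx, hsub i' hx'⟩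
    simp [o.2 i i' hne] at this

theorem exists_ne_nonempty_of_covers (o : Alloc n m) (x : Fin m)
    (hcov : ∀ x, ∃ i, x ∈ o.1 i) (huniv : ∀ i, o.1 i ≠ univ) :
    ∃ j₁ j₂, j₁ ≠ j₂ ∧ (o.1 j₁).Nonempty ∧ (o.1 j₂).Nonempty := by
  obtain ⟨j₁, hx⟩ := hcov x
  obtain ⟨y, hy⟩ := not_forall.1 fun h => huniv j₁ (eq_univ_iff_forall.2 h)
  obtain ⟨j₂, hy'⟩ := hcov y
  exact ⟨j₁, j₂, by rintro rfl; exact hy hy', ⟨x, hx⟩, ⟨y, hy'⟩⟩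

def remove (o : Alloc n m) (j : Fin n) : Alloc n m :=
  ⟨fun l => if l = j then ∅ else o.1 l, fun a b hab => by
    by_cases ha : a = j
    · simp [ha]
    · by_cases hb : b = j
      · simp [hb]
      · simpa [ha, hb] using o.2 a b hab⟩

theorem remove_apply_of_ne (o : Alloc n m) {j l : Fin n} (h : l ≠ j) :
    (o.remove j).1 l = o.1 l := if_neg h

theorem notMem_remove_of_mem (o : Alloc n m) {j : Fin n} {x : Fin m} (hx : x ∈ o.1 j)
    (i : Fin n) : x ∉ (o.remove j).1 i := by
  intro hi
  by_cases h : i = j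
  · simp [remove, h] at hi
  · rw [remove_apply_of_ne o h] at hi
    have : x ∈ o.1 i ∩ o.1 j := mem_inter.2 ⟨hi, hx⟩
    simp [o.2 i j h] at this

theorem not_specialAlloc_remove (o : Alloc n m) {j : Fin n} (hj : (o.1 j).Nonempty) :
    ¬ SpecialAlloc (o.remove j) := fun hsp => by
  obtain ⟨x, hx⟩ := hj
  obtain ⟨i, hi⟩ := hsp.1 x
  exact o.notMem_remove_of_mem hx i hi

end Alloc

section Payments

variable {n m : ℕ} (lam : Alloc n m → ℝ) (v : Fin n → Finset (Fin m) → ℝ)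
  (os : Alloc n m)

noncomputable def lamPayment (j : Fin n) : ℝ :=
  allocMax (fun o => (∑ l ∈ univ.erase j, v l (o.1 l)) + lam o)
    - ((∑ l ∈ univ.erase j, v l (os.1 l)) + lam os)

theorem amaRev_one_eq_sum_lamPayment :
    amaRev (fun _ => 1) lam v os = ∑ j, lamPayment lam v os j := by
  simp [amaRev, lamPayment]

theorem le_lamPayment (j : Fin n) (o : Alloc n m) :
    (∑ l ∈ univ.erase j, v l (o.1 l)) + lam o
      - ((∑ l ∈ univ.erase j, v l (os.1 l)) + lam os) ≤ lamPayment lam v os j :=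
  sub_le_sub_right (le_sup' (fun o : Alloc n m => (∑ l ∈ univ.erase j, v l (o.1 l)) + lam o)
    (mem_univ o)) _

theorem lamPayment_nonneg (j : Fin n) : 0 ≤ lamPayment lam v os j := by
  simpa using le_lamPayment lam v os j os

theorem sub_le_lamPayment_remove (j : Fin n) :
    lam (os.remove j) - lam os ≤ lamPayment lam v os j := by
  have hothers :
      ∑ l ∈ univ.erase j, v l ((os.remove j).1 l) = ∑ l ∈ univ.erase j, v l (os.1 l) :=
    sum_congr rfl fun l hl => by rw [os.remove_apply_of_ne (ne_of_mem_erase hl)]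
  simpa [hothers] using le_lamPayment lam v os j (os.remove j)

theorem add_le_amaRev_one {j₁ j₂ : Fin n} (hne : j₁ ≠ j₂) {a b : ℝ}
    (ha : a ≤ lamPayment lam v os j₁) (hb : b ≤ lamPayment lam v os j₂) :
    a + b ≤ amaRev (fun _ => 1) lam v os := by
  calc a + b ≤ ∑ j ∈ {j₁, j₂}, lamPayment lam v os j := by
        rw [sum_pair hne]; exact add_le_add ha hb
    _ ≤ ∑ j, lamPayment lam v os j :=
        sum_le_sum_of_subset_of_nonneg (subset_univ _) fun j _ _ => lamPayment_nonneg lam v os j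
    _ = amaRev (fun _ => 1) lam v os := (amaRev_one_eq_sum_lamPayment lam v os).symm

end Payments

theorem sum_vOf_eq {n m : ℕ} (ot o : Alloc n m) :
    ∑ i, vOf ot i (o.1 i) = ((∑ i, (o.1 i ∩ ot.1 i).card : ℕ) : ℝ) := by
  simp [vOf]

/-- Every `o ≠ ot` has welfare at most `m - 1` on `v^ot`, a gap that boosts differing by
less than `1` cannot close. -/
theorem IsMaxAlloc.eq_of_vOf {n m : ℕ} {lam : Alloc n m → ℝ} {ot os : Alloc n m}
    (hcov : ∀ x, ∃ i, x ∈ ot.1 i) (hlam : ∀ o, lam o < lam ot + 1)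
    (hos : IsMaxAlloc (fun _ => 1) lam (vOf ot) os) : os = ot := by
  have hmax := hos ot
  simp only [one_mul, sum_vOf_eq, inter_self, ot.sum_card_eq_of_covers hcov] at hmax
  have hle : ∑ i, (os.1 i ∩ ot.1 i).card ≤ m :=
    (sum_le_sum fun i _ => card_le_card inter_subset_right).trans_eq
      (ot.sum_card_eq_of_covers hcov)
  have hlt : (m : ℝ) < (∑ i, (os.1 i ∩ ot.1 i).card : ℕ) + 1 := by linarith [hlam os]
  refine os.eq_of_sum_card_inter_eq ot hcov ?_
  rw [ot.sum_card_eq_of_covers hcov]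
  exact le_antisymm hle (by exact_mod_cast Nat.lt_add_one_iff.1 (by exact_mod_cast hlt))

theorem stmt10_general (n m : ℕ) (hm : 2 ≤ m)
    (γ : ℝ) (hγ : γ ∈ Set.Ioo (0 : ℝ) 1)
    (H : Finset (Alloc n m)) (hH : ∀ o ∈ H, SpecialAlloc o)
    (ot : Alloc n m) (hot : ot ∈ H)
    (os : Alloc n m)
    (hos : IsMaxAlloc (fun _ => 1) (fun o => if o ∈ H then 0 else 1 - γ) (vOf ot) os) :
    2 - 2 * γ ≤
      amaRev (fun _ => 1) (fun o => if o ∈ H then 0 else 1 - γ) (vOf ot) os := by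
  set lam : Alloc n m → ℝ := fun o => if o ∈ H then 0 else 1 - γ with hlam_def
  obtain ⟨hcov, huniv⟩ := hH ot hot
  have hlam : ∀ o, lam o < lam ot + 1 := fun o => by
    simp only [hlam_def, hot, if_true]
    split_ifs <;> linarith [hγ.1]
  obtain rfl := hos.eq_of_vOf hcov hlam
  have hpay : ∀ j, (os.1 j).Nonempty → 1 - γ ≤ lamPayment lam (vOf os) os j := fun j hj => by
    have hrem : os.remove j ∉ H := fun h => os.not_specialAlloc_remove hj (hH _ h)
    simpa [hlam_def, hrem, hot] using sub_le_lamPayment_remove lam (vOf os) os j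
  obtain ⟨j₁, j₂, hne, hj₁, hj₂⟩ :=
    os.exists_ne_nonempty_of_covers ⟨0, by omega⟩ hcov huniv
  linarith [add_le_amaRev_one lam _ _ hne (hpay j₁ hj₁) (hpay j₂ hj₂)]

/-- In the lower-bound construction for `λ`-auctions, if
`õ ∈ H` then the revenue of the auction `A_H` on `v^õ` is at least `2 − 2γ`. -/
theorem stmt10 (n m : ℕ) (hn : 2 ≤ n) (hm : 2 ≤ m)
    (γ : ℝ) (hγ : γ ∈ Set.Ioo (0 : ℝ) 1)
    (H : Finset (Alloc n m)) (hH : ∀ o ∈ H, SpecialAlloc o)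
    (ot : Alloc n m) (hot : ot ∈ H)
    (os : Alloc n m)
    (hos : IsMaxAlloc (fun _ => 1) (fun o => if o ∈ H then 0 else 1 - γ) (vOf ot) os) :
    2 - 2 * γ ≤
      amaRev (fun _ => 1) (fun o => if o ∈ H then 0 else 1 - γ) (vOf ot) os :=
  stmt10_general n m hm γ hγ H hH ot hot os hos
end

section
/- For any m ≥ 2 and any γ ∈ (0,1), there exists a set V = {v^1, …, v^N} of N = 2^m − 2 two-bidder, m-item additive valuation vectors such that for every subset H ⊆ V there exists a VVCA whose revenue is 1 − γ on every v^i ∈ H and 0 on every v^i ∉ H. -/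
open Finset MeasureTheory

/-! A bidder valuing the items of `s` at `1` and all other items at `-1` prefers `s` to any other
bundle by at least `1`, so boosts in `(0, 1]` on her bundle never move the allocation away from
`s`. If the second bidder values nothing, only the first one pays, namely the boost she forgoes
by not receiving the grand bundle: `1 - c s` when the grand bundle carries the maximal boost `1`.
Labelling the valuations injectively by bundles other than the grand bundle and boosting the
bundles labelled by `H` with `γ` and all others with `1` gives revenue `1 - γ` on `H`, `0` off it.
-/

lemma exists_embedding_fin_forall_ne {α : Type*} [Fintype α] [DecidableEq α] (a : α) {k : ℕ}
    (hk : k < Fintype.card α) : ∃ e : Fin k ↪ α, ∀ i, e i ≠ a := by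
  have hcard : Fintype.card (Fin k) ≤ Fintype.card {b : α // b ≠ a} := by
    rw [Fintype.card_fin, Fintype.card_subtype_compl, Fintype.card_subtype_eq]
    omega
  obtain ⟨f⟩ := Function.Embedding.nonempty_of_card_le hcard
  exact ⟨f.trans (Function.Embedding.subtype _), fun i => (f i).2⟩

namespace Alloc

variable {n m : ℕ}

def single (i : Fin n) (b : Finset (Fin m)) : Alloc n m :=
  ⟨fun j => if j = i then b else ∅, fun j k hjk => by
    by_cases hj : j = i
    · simp [hj, Ne.symm (hj ▸ hjk)]
    · simp [hj]⟩

@[simp]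
lemma single_apply_self (i : Fin n) (b : Finset (Fin m)) : (single i b).1 i = b :=
  if_pos rfl

end Alloc

lemma allocMax_eq_of_forall_le {n m : ℕ} {f : Alloc n m → ℝ} {os : Alloc n m}
    (h : ∀ o, f o ≤ f os) : allocMax f = f os :=
  le_antisymm (Finset.sup'_le _ _ fun o _ => h o) (Finset.le_sup' f (Finset.mem_univ os))

lemma amaRev_eq_of_forall_ne_eq_zero {n m : ℕ} {w : Fin n → ℝ} {lam : Alloc n m → ℝ}
    {v : Fin n → Finset (Fin m) → ℝ} {os : Alloc n m} (k : Fin n) (hv : ∀ i ≠ k, v i = 0)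
    (hos : IsMaxAlloc w lam v os) :
    amaRev w lam v os = (w k)⁻¹ * (allocMax lam - lam os) := by
  have hterm : ∀ i ≠ k, ∀ o : Alloc n m, w i * v i (o.1 i) = 0 := fun i hi o => by
    simp [hv i hi]
  have hk : ∀ o : Alloc n m, ∑ l ∈ Finset.univ.erase k, w l * v l (o.1 l) = 0 := fun o =>
    Finset.sum_eq_zero fun l hl => hterm l (Finset.ne_of_mem_erase hl) o
  rw [amaRev, Finset.sum_eq_single k]
  · simp only [hk, zero_add]
  · intro j _ hjk
    have hj : ∀ o : Alloc n m, ∑ l ∈ Finset.univ.erase j, w l * v l (o.1 l) =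
        ∑ l, w l * v l (o.1 l) := fun o => Finset.sum_erase _ (hterm j hjk o)
    simp only [hj]
    rw [allocMax_eq_of_forall_le hos, sub_self, mul_zero]
  · simp

def signVal {m : ℕ} (s b : Finset (Fin m)) : ℝ :=
  ∑ j ∈ b, if j ∈ s then 1 else -1

lemma signVal_eq_card_sub_card {m : ℕ} (s b : Finset (Fin m)) :
    signVal s b = #(b ∩ s) - #(b \ s) := by
  rw [signVal, Finset.sum_ite, Finset.filter_mem_eq_inter, ← Finset.sdiff_eq_filter]
  simp [sub_eq_add_neg]

lemma signVal_add_one_le_of_ne {m : ℕ} {s b : Finset (Fin m)} (hb : b ≠ s) :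
    signVal s b + 1 ≤ signVal s s := by
  rw [signVal_eq_card_sub_card, signVal_eq_card_sub_card, Finset.inter_self, Finset.sdiff_self,
    Finset.card_empty, Nat.cast_zero, sub_zero]
  by_cases hbs : b ⊆ s
  · have hlt : #b < #s := Finset.card_lt_card (Finset.ssubset_iff_subset_ne.mpr ⟨hbs, hb⟩)
    rw [Finset.inter_eq_left.mpr hbs, Finset.sdiff_eq_empty_iff_subset.mpr hbs]
    simp only [Finset.card_empty, Nat.cast_zero, sub_zero]
    exact_mod_cast hlt
  · have hout : (1 : ℝ) ≤ #(b \ s) := by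
      exact_mod_cast Finset.card_pos.mpr (Finset.sdiff_nonempty.mpr hbs)
    have hin : (#(b ∩ s) : ℝ) ≤ #s := by
      exact_mod_cast Finset.card_le_card Finset.inter_subset_right
    linarith

lemma signVal_injective {m : ℕ} : Function.Injective (signVal (m := m)) := by
  intro s t h
  ext j
  have hmem : ∀ u : Finset (Fin m), j ∈ u ↔ 0 < signVal u {j} := fun u => by
    by_cases hj : j ∈ u <;> simp [signVal, hj]
  rw [hmem, hmem, h]

lemma additiveVal_signVal {m : ℕ} (s : Finset (Fin m)) :
    AdditiveVal ![signVal s, (0 : Finset (Fin m) → ℝ)] := by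
  intro i b
  fin_cases i <;> simp [signVal]

lemma amaRev_signVal {m : ℕ} {s : Finset (Fin m)} {c : Finset (Fin m) → ℝ}
    (hc : ∀ b, c b ≤ 1) (hc_univ : c Finset.univ = 1) (hcs : 0 < c s) {os : Alloc 2 m}
    (hos : IsMaxAlloc (fun _ => 1) (fun o => ∑ i, ![c, 0] i (o.1 i)) ![signVal s, 0] os) :
    amaRev (fun _ => 1) (fun o => ∑ i, ![c, 0] i (o.1 i)) ![signVal s, 0] os = 1 - c s := by
  have hlam : ∀ o : Alloc 2 m, ∑ i, ![c, 0] i (o.1 i) = c (o.1 0) := by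
    simp [Fin.sum_univ_two]
  have hos_s : os.1 0 = s := by
    by_contra hne
    have h := hos (Alloc.single 0 s)
    simp only [Fin.sum_univ_two, hlam, Alloc.single_apply_self, Matrix.cons_val_zero,
      Matrix.cons_val_one, Pi.zero_apply, one_mul, add_zero] at h
    linarith [signVal_add_one_le_of_ne hne, hc (os.1 0)]
  have hmax : allocMax (fun o : Alloc 2 m => ∑ i, ![c, 0] i (o.1 i)) = 1 := by
    rw [allocMax_eq_of_forall_le (os := Alloc.single 0 Finset.univ)] <;>
      simp only [hlam, Alloc.single_apply_self, hc_univ]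
    exact fun o => hc (o.1 0)
  rw [amaRev_eq_of_forall_ne_eq_zero 0 (by simp [Fin.forall_fin_two]) hos, hmax, hlam, hos_s,
    inv_one, one_mul]

theorem stmt13_general (m : ℕ) (γ : ℝ) (hγ : γ ∈ Set.Ioo (0 : ℝ) 1) :
    ∃ vs : Fin (2 ^ m - 2) → (Fin 2 → Finset (Fin m) → ℝ),
      Function.Injective vs ∧
      (∀ ℓ, AdditiveVal (vs ℓ)) ∧
      ∀ H : Set (Fin (2 ^ m - 2)),
        ∃ (w : Fin 2 → ℝ) (cb : Fin 2 → Finset (Fin m) → ℝ),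
          (∀ i, 0 < w i) ∧
          ∀ ℓ, ∀ os : Alloc 2 m,
            IsMaxAlloc w (fun o => ∑ i, cb i (o.1 i)) (vs ℓ) os →
              (ℓ ∈ H → amaRev w (fun o => ∑ i, cb i (o.1 i)) (vs ℓ) os = 1 - γ) ∧
              (ℓ ∉ H → amaRev w (fun o => ∑ i, cb i (o.1 i)) (vs ℓ) os = 0) := by
  classical
  obtain ⟨e, he⟩ := exists_embedding_fin_forall_ne (Finset.univ : Finset (Fin m))
    (k := 2 ^ m - 2) (by simp [Nat.two_pow_pos m])
  refine ⟨fun ℓ => ![signVal (e ℓ), 0], fun ℓ ℓ' h => e.injective (signVal_injective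
    (congrFun h 0)), fun ℓ => additiveVal_signVal _, fun H => ?_⟩
  set c : Finset (Fin m) → ℝ := fun b => if b ∈ e '' H then γ else 1
  have hc : ∀ b, c b ≤ 1 := fun b => by
    simp only [c]; split_ifs <;> linarith [hγ.2]
  have hc_univ : c Finset.univ = 1 := if_neg fun ⟨ℓ, _, h⟩ => he ℓ h
  have hc_pos : ∀ b, 0 < c b := fun b => by
    simp only [c]; split_ifs <;> linarith [hγ.1]
  refine ⟨fun _ => 1, ![c, 0], fun _ => one_pos, fun ℓ os hos => ?_⟩
  rw [amaRev_signVal hc hc_univ (hc_pos _) hos]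
  have hmem : e ℓ ∈ e '' H ↔ ℓ ∈ H := e.injective.mem_set_image
  simp only [c, hmem]
  exact ⟨fun hH => by rw [if_pos hH], fun hH => by rw [if_neg hH, sub_self]⟩

/-- For any `m ≥ 2` and `γ ∈ (0,1)`, there is a set of
`2^m − 2` two-bidder additive valuation vectors such that for every subset `H`
there is a VVCA with revenue `1 − γ` on `H` and `0` outside `H`. -/
theorem stmt13 (m : ℕ) (hm : 2 ≤ m) (γ : ℝ) (hγ : γ ∈ Set.Ioo (0 : ℝ) 1) :
    ∃ vs : Fin (2 ^ m - 2) → (Fin 2 → Finset (Fin m) → ℝ),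
      Function.Injective vs ∧
      (∀ ℓ, AdditiveVal (vs ℓ)) ∧
      ∀ H : Set (Fin (2 ^ m - 2)),
        ∃ (w : Fin 2 → ℝ) (cb : Fin 2 → Finset (Fin m) → ℝ),
          (∀ i, 0 < w i) ∧
          ∀ ℓ, ∀ os : Alloc 2 m,
            IsMaxAlloc w (fun o => ∑ i, cb i (o.1 i)) (vs ℓ) os →
              (ℓ ∈ H → amaRev w (fun o => ∑ i, cb i (o.1 i)) (vs ℓ) os = 1 - γ) ∧
              (ℓ ∉ H → amaRev w (fun o => ∑ i, cb i (o.1 i)) (vs ℓ) os = 0) :=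
  stmt13_general m γ hγ
end

section
/- For all n ≥ 2 and m ≥ 2, the pseudo-dimension of the class {v ↦ rev_v(c) : c ≥ 0} of n-bidder, m-item MBA revenue functions, viewed as real-valued functions on the set of n-bidder, m-item valuation vectors with nonnegative valuations, equals 2. In particular, no set of three valuation vectors can be pseudo-shattered by this class, and there exists a pseudo-shattered set of two valuation vectors. -/
open Finset MeasureTheory

/-- Valuation vectors with nonnegative values (and zero on the empty bundle). -/
abbrev ValNN (n m : ℕ) : Type :=
  {v : Fin n → Finset (Fin m) → ℝ // (∀ i, v i ∅ = 0) ∧ ∀ i b, 0 ≤ v i b}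

/-- The class of `n`-bidder, `m`-item MBA revenue functions `v ↦ rev_v(c)`, `c ≥ 0`. -/
def mbaClass (n m : ℕ) : Set (ValNN n m → ℝ) :=
  {f | ∃ c : ℝ, 0 ≤ c ∧ f = fun v => mbaRev v.1 c}

/-! Each revenue function `c ↦ rev_v(c)` is quasiconcave on `[0, ∞)`. At a boost `c` where the
chosen allocation is not a grand bundle, lowering the boost leaves the boosted welfare maximum
unchanged and can only lower the other maxima, so revenue does not decrease up to `c`; where it is
a grand bundle, raising the boost raises the welfare maximum exactly as fast as it can raise any
other maximum, so revenue does not increase beyond `c`. The strict superlevel sets of the three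
revenue functions at the witnesses are therefore intervals of `[0, ∞)`. Boosts realising the
patterns `∅`, `{0}`, `{1}`, `{2}` give points `e, d₀, d₁, d₂`, where `d i` lies outside the `i`-th
interval and everything else inside; but some `d i` lies between `e` and another `d j`.

For the lower bound, let bidders `i₀ ≠ i₁` value the distinct items `j₀`, `j₁` at `a` (and nothing
else). Then `rev(c) = 2c` for `c < a` and `rev(c) = a` for `c > a`, and two such valuation vectors
with `a = 1, 2` are pseudo-shattered with witnesses `1, 3/2`. -/

section Quasiconcave

variable {n m : ℕ}

lemma le_allocMax (f : Alloc n m → ℝ) (o : Alloc n m) : f o ≤ allocMax f :=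
  Finset.le_sup' f (Finset.mem_univ o)

lemma allocMax_le {f : Alloc n m → ℝ} {t : ℝ} (h : ∀ o, f o ≤ t) : allocMax f ≤ t :=
  Finset.sup'_le _ _ fun o _ => h o

lemma allocMax_eq_apply_chooseMax (f : Alloc n m → ℝ) : allocMax f = f (chooseMax f) :=
  le_antisymm
    (allocMax_le fun o => (Classical.choose_spec
      (Finset.exists_max_image Finset.univ f Finset.univ_nonempty)).2 o (Finset.mem_univ o))
    (le_allocMax f _)

def IsGrand (o : Alloc n m) : Prop :=
  ∃ i, o.1 i = Finset.univ

lemma mbaLam_of_isGrand {c : ℝ} {o : Alloc n m} (h : IsGrand o) : mbaLam c o = c :=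
  if_pos h

lemma mbaLam_of_not_isGrand {c : ℝ} {o : Alloc n m} (h : ¬ IsGrand o) : mbaLam c o = 0 :=
  if_neg h

lemma mbaLam_le {c : ℝ} (hc : 0 ≤ c) (o : Alloc n m) : mbaLam c o ≤ c := by
  unfold mbaLam; split_ifs <;> simp [hc]

lemma mbaLam_nonneg {c : ℝ} (hc : 0 ≤ c) (o : Alloc n m) : 0 ≤ mbaLam c o := by
  unfold mbaLam; split_ifs <;> simp [hc]

lemma mbaLam_mono {c c' : ℝ} (h : c ≤ c') (o : Alloc n m) : mbaLam c o ≤ mbaLam c' o := by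
  unfold mbaLam; split_ifs <;> simp [h]

lemma mbaLam_le_add {c c' : ℝ} (h : c ≤ c') (o : Alloc n m) :
    mbaLam c' o ≤ mbaLam c o + (c' - c) := by
  unfold mbaLam; split_ifs <;> linarith

def welfareOn (v : Fin n → Finset (Fin m) → ℝ) (s : Finset (Fin n)) (o : Alloc n m) : ℝ :=
  ∑ l ∈ s, v l (o.1 l)

noncomputable def boostedMax (g : Alloc n m → ℝ) (c : ℝ) : ℝ :=
  allocMax fun o => g o + mbaLam c o

noncomputable def boostedArgmax (g : Alloc n m → ℝ) (c : ℝ) : Alloc n m :=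
  chooseMax fun o => g o + mbaLam c o

lemma le_boostedMax (g : Alloc n m → ℝ) (c : ℝ) (o : Alloc n m) :
    g o + mbaLam c o ≤ boostedMax g c :=
  le_allocMax (fun o => g o + mbaLam c o) o

lemma boostedMax_eq (g : Alloc n m → ℝ) (c : ℝ) :
    boostedMax g c = g (boostedArgmax g c) + mbaLam c (boostedArgmax g c) :=
  allocMax_eq_apply_chooseMax _

lemma boostedMax_mono (g : Alloc n m → ℝ) : Monotone (boostedMax g) := fun c c' h =>
  allocMax_le fun o => by linarith [mbaLam_mono h o, le_boostedMax g c' o]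

lemma boostedMax_le_add (g : Alloc n m → ℝ) {c c' : ℝ} (h : c ≤ c') :
    boostedMax g c' ≤ boostedMax g c + (c' - c) :=
  allocMax_le fun o => by linarith [mbaLam_le_add h o, le_boostedMax g c o]

lemma boostedMax_eq_of_not_isGrand (g : Alloc n m → ℝ) {c c' : ℝ} (h : c ≤ c')
    (hg : ¬ IsGrand (boostedArgmax g c')) : boostedMax g c = boostedMax g c' := by
  refine le_antisymm (boostedMax_mono g h) ?_
  have := le_boostedMax g c (boostedArgmax g c')
  rwa [mbaLam_of_not_isGrand hg, ← mbaLam_of_not_isGrand (c := c') hg, ← boostedMax_eq] at this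

lemma boostedMax_eq_add_of_isGrand (g : Alloc n m → ℝ) {c c' : ℝ} (h : c ≤ c')
    (hg : IsGrand (boostedArgmax g c)) : boostedMax g c' = boostedMax g c + (c' - c) := by
  refine le_antisymm (boostedMax_le_add g h) ?_
  have := le_boostedMax g c' (boostedArgmax g c)
  rw [boostedMax_eq g c, mbaLam_of_isGrand hg]
  rw [mbaLam_of_isGrand hg] at this
  linarith

lemma mbaRev_eq (v : Fin n → Finset (Fin m) → ℝ) (c : ℝ) :
    mbaRev v c
      = ∑ j, (boostedMax (welfareOn v (univ.erase j)) c - boostedMax (welfareOn v univ) c)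
        + welfareOn v univ (boostedArgmax (welfareOn v univ) c) := by
  set os := boostedArgmax (welfareOn v univ) c
  have hpay : ∀ j, boostedMax (welfareOn v (univ.erase j)) c
      - (welfareOn v (univ.erase j) os + mbaLam c os)
      = boostedMax (welfareOn v (univ.erase j)) c - boostedMax (welfareOn v univ) c
        + v j (os.1 j) := by
    intro j
    rw [boostedMax_eq (welfareOn v univ), welfareOn, welfareOn,
      Finset.sum_erase_eq_sub (Finset.mem_univ j)]
    ring
  simp only [mbaRev, amaRev, inv_one, one_mul]
  exact (Finset.sum_congr rfl fun j _ => hpay j).trans (Finset.sum_add_distrib)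

lemma mbaRev_le_of_not_isGrand (v : Fin n → Finset (Fin m) → ℝ) {c c' : ℝ} (hc : 0 ≤ c)
    (h : c ≤ c') (hg : ¬ IsGrand (boostedArgmax (welfareOn v univ) c')) :
    mbaRev v c ≤ mbaRev v c' := by
  have hM := boostedMax_eq_of_not_isGrand (welfareOn v univ) h hg
  have hW : welfareOn v univ (boostedArgmax (welfareOn v univ) c)
      ≤ welfareOn v univ (boostedArgmax (welfareOn v univ) c') := by
    have h₁ := boostedMax_eq (welfareOn v univ) c
    have h₂ := boostedMax_eq (welfareOn v univ) c'
    rw [mbaLam_of_not_isGrand hg] at h₂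
    linarith [mbaLam_nonneg hc (boostedArgmax (welfareOn v univ) c)]
  rw [mbaRev_eq, mbaRev_eq, hM]
  gcongr with j
  exact boostedMax_mono _ h

lemma mbaRev_le_of_isGrand (v : Fin n → Finset (Fin m) → ℝ) {c c' : ℝ} (h : c ≤ c')
    (hg : IsGrand (boostedArgmax (welfareOn v univ) c)) : mbaRev v c' ≤ mbaRev v c := by
  rw [mbaRev_eq, mbaRev_eq]
  set W := welfareOn v univ
  have hM := boostedMax_eq_add_of_isGrand W h hg
  by_cases hg' : IsGrand (boostedArgmax W c')
  · have hW : W (boostedArgmax W c') = W (boostedArgmax W c) := by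
      have h₁ := boostedMax_eq W c
      have h₂ := boostedMax_eq W c'
      rw [mbaLam_of_isGrand hg] at h₁
      rw [mbaLam_of_isGrand hg'] at h₂
      linarith
    rw [hW, hM]
    gcongr ?_ + _
    refine Finset.sum_le_sum fun j _ => ?_
    linarith [boostedMax_le_add (welfareOn v (univ.erase j)) h]
  · -- a non-grand maximiser at `c'` forces `c' = c`
    have h₁ := boostedMax_eq W c'
    have h₂ := le_boostedMax W c (boostedArgmax W c')
    rw [mbaLam_of_not_isGrand hg'] at h₁ h₂
    obtain rfl : c = c' := le_antisymm h (by linarith)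
    rfl

theorem quasiconcaveOn_mbaRev (v : Fin n → Finset (Fin m) → ℝ) :
    QuasiconcaveOn ℝ (Set.Ici 0) (mbaRev v) := by
  refine fun r => convex_iff_ordConnected.2 ⟨fun c₁ h₁ c₃ h₃ c₂ h₂ => ⟨h₁.1.trans h₂.1, ?_⟩⟩
  by_cases hg : IsGrand (boostedArgmax (welfareOn v univ) c₂)
  · exact h₃.2.trans (mbaRev_le_of_isGrand v h₂.2 hg)
  · exact h₁.2.trans (mbaRev_le_of_not_isGrand v h₁.1 h₂.1 hg)

end Quasiconcave

lemma exists_mem_uIcc_of_fin_three {α : Type*} [LinearOrder α] (d : Fin 3 → α) (e : α) :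
    ∃ i j, i ≠ j ∧ d i ∈ Set.uIcc (d j) e := by
  obtain ⟨i, j, hij, hside⟩ :=
    Fintype.exists_ne_map_eq_of_card_lt (fun k => decide (d k ≤ e)) (by simp)
  simp only [decide_eq_decide] at hside
  rcases le_total (d i) (d j) with h | h
  · by_cases hi : d i ≤ e
    · exact ⟨j, i, hij.symm, Set.mem_uIcc.2 (Or.inl ⟨h, hside.1 hi⟩)⟩
    · exact ⟨i, j, hij, Set.mem_uIcc.2 (Or.inr ⟨(not_le.1 hi).le, h⟩)⟩
  · by_cases hj : d j ≤ e
    · exact ⟨i, j, hij, Set.mem_uIcc.2 (Or.inl ⟨h, hside.2 hj⟩)⟩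
    · exact ⟨j, i, hij.symm, Set.mem_uIcc.2 (Or.inr ⟨(not_le.1 hj).le, h⟩)⟩

theorem not_pShatters_of_quasiconcaveOn {X : Type*} {F : Set (X → ℝ)} {s : Set ℝ}
    (φ : X → ℝ → ℝ) (hφ : ∀ y, QuasiconcaveOn ℝ s (φ y))
    (hF : ∀ f ∈ F, ∃ c ∈ s, f = fun y => φ y c) (x : Fin 3 → X) : ¬ PShatters F x := by
  rintro ⟨z, hz⟩
  have realise : ∀ T : Finset (Fin 3), ∃ c ∈ s,
      (∀ i ∈ T, φ (x i) c ≤ z i) ∧ ∀ i ∉ T, z i < φ (x i) c := by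
    intro T
    obtain ⟨f, hf, hle, hlt⟩ := hz T
    obtain ⟨c, hc, rfl⟩ := hF f hf
    exact ⟨c, hc, hle, hlt⟩
  obtain ⟨e, he, -, hea⟩ := realise ∅
  choose d hd hdle hdlt using fun k => realise {k}
  obtain ⟨i, j, hij, hdi⟩ := exists_mem_uIcc_of_fin_three d e
  have hmem : d i ∈ {c ∈ s | z i < φ (x i) c} :=
    ((hφ (x i)).convex_gt (z i)).ordConnected.uIcc_subset
      ⟨hd j, hdlt j i (by simpa using hij)⟩ ⟨he, hea i (Finset.notMem_empty i)⟩ hdi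
  exact (hdle i i (Finset.mem_singleton_self i)).not_gt hmem.2

theorem not_pShatters_mbaClass {n m : ℕ} (x : Fin 3 → ValNN n m) :
    ¬ PShatters (mbaClass n m) x := by
  refine not_pShatters_of_quasiconcaveOn (fun v : ValNN n m => mbaRev v.1)
    (fun v => quasiconcaveOn_mbaRev v.1) ?_ x
  rintro f ⟨c, hc, rfl⟩
  exact ⟨c, hc, rfl⟩

lemma pShatters_of_forall_iff {X : Type*} {F : Set (X → ℝ)} {k : ℕ} {x : Fin k → X}
    (z : Fin k → ℝ) (h : ∀ T : Finset (Fin k), ∃ f ∈ F, ∀ i, f (x i) ≤ z i ↔ i ∈ T) :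
    PShatters F x := by
  refine ⟨z, fun T => ?_⟩
  obtain ⟨f, hf, hT⟩ := h T
  exact ⟨f, hf, fun i hi => (hT i).2 hi, fun i hi => not_le.1 fun h' => hi ((hT i).1 h')⟩

def Alloc.ofAssignment {n m : ℕ} (f : Fin m → Option (Fin n)) : Alloc n m :=
  ⟨fun i => univ.filter (f · = some i), fun i k hik => by
    ext j
    simp only [Finset.mem_inter, Finset.mem_filter, Finset.mem_univ, true_and,
      Finset.notMem_empty, iff_false, not_and]
    intro hi hk
    exact hik (Option.some_injective _ (hi.symm.trans hk))⟩

lemma Alloc.mem_ofAssignment {n m : ℕ} {f : Fin m → Option (Fin n)} {i : Fin n} {j : Fin m} :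
    j ∈ (Alloc.ofAssignment f).1 i ↔ f j = some i := by
  simp [Alloc.ofAssignment]

lemma Alloc.eq_empty_of_eq_univ {n m : ℕ} {o : Alloc n m} {i k : Fin n} (hi : o.1 i = univ)
    (hk : k ≠ i) : o.1 k = ∅ := by
  simpa [hi] using o.2 k i hk

section PairValuation

variable {n m : ℕ} {i₀ i₁ : Fin n} {j₀ j₁ : Fin m} {a c : ℝ}

def pairVal (i₀ i₁ : Fin n) (j₀ j₁ : Fin m) (a : ℝ) : Fin n → Finset (Fin m) → ℝ :=
  fun i b => (if i = i₀ then (if j₀ ∈ b then a else 0) else 0)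
    + (if i = i₁ then (if j₁ ∈ b then a else 0) else 0)

lemma pairVal_comm : pairVal i₀ i₁ j₀ j₁ a = pairVal i₁ i₀ j₁ j₀ a := by
  funext i b
  exact add_comm _ _

lemma welfareOn_pairVal (s : Finset (Fin n)) (o : Alloc n m) :
    welfareOn (pairVal i₀ i₁ j₀ j₁ a) s o
      = (if i₀ ∈ s then (if j₀ ∈ o.1 i₀ then a else 0) else 0)
        + (if i₁ ∈ s then (if j₁ ∈ o.1 i₁ then a else 0) else 0) := by
  simp only [welfareOn, pairVal, Finset.sum_add_distrib, Finset.sum_ite_eq']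

lemma welfare_pairVal_le (ha : 0 ≤ a) (o : Alloc n m) :
    welfareOn (pairVal i₀ i₁ j₀ j₁ a) univ o ≤ 2 * a := by
  rw [welfareOn_pairVal]
  simp only [Finset.mem_univ, if_true]
  split_ifs <;> linarith

lemma welfare_pairVal_le_of_isGrand (hi : i₀ ≠ i₁) (ha : 0 ≤ a) {o : Alloc n m}
    (hg : IsGrand o) : welfareOn (pairVal i₀ i₁ j₀ j₁ a) univ o ≤ a := by
  obtain ⟨k, hk⟩ := hg
  rw [welfareOn_pairVal]
  simp only [Finset.mem_univ, if_true]
  by_cases h : i₀ = k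
  · rw [Alloc.eq_empty_of_eq_univ hk fun h' => hi (h.trans h'.symm)]
    split_ifs <;> simp_all
  · rw [Alloc.eq_empty_of_eq_univ hk h]
    split_ifs <;> simp_all

lemma welfareOn_pairVal_grand (hi : i₀ ≠ i₁) (s : Finset (Fin n)) (hs : i₀ ∈ s) :
    welfareOn (pairVal i₀ i₁ j₀ j₁ a) s (Alloc.ofAssignment fun _ => some i₀) = a := by
  simp [welfareOn_pairVal, Alloc.mem_ofAssignment, hs, hi]

lemma isGrand_ofAssignment_const (k : Fin n) :
    IsGrand (Alloc.ofAssignment (m := m) fun _ => some k) :=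
  ⟨k, by ext; simp [Alloc.mem_ofAssignment]⟩

lemma boostedMax_pairVal_erase (hi : i₀ ≠ i₁) (ha : 0 ≤ a) (hc : 0 ≤ c) :
    boostedMax (welfareOn (pairVal i₀ i₁ j₀ j₁ a) (univ.erase i₀)) c = a + c := by
  refine le_antisymm (allocMax_le fun o => ?_) ?_
  · have := mbaLam_le hc o
    rw [welfareOn_pairVal]
    simp only [Finset.mem_erase, Finset.mem_univ, and_true, ne_eq, not_true_eq_false,
      if_false, zero_add, hi.symm, not_false_eq_true, if_true]
    split_ifs <;> linarith
  · have := le_boostedMax (welfareOn (pairVal i₀ i₁ j₀ j₁ a) (univ.erase i₀)) c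
      (Alloc.ofAssignment fun _ => some i₁)
    rw [pairVal_comm] at this ⊢
    rwa [welfareOn_pairVal_grand hi.symm _ (by simpa using hi.symm),
      mbaLam_of_isGrand (isGrand_ofAssignment_const i₁)] at this

lemma welfareOn_pairVal_erase_of_ne {k : Fin n} (h₀ : k ≠ i₀) (h₁ : k ≠ i₁) :
    welfareOn (pairVal i₀ i₁ j₀ j₁ a) (univ.erase k)
      = welfareOn (pairVal i₀ i₁ j₀ j₁ a) univ := by
  funext o
  simp [welfareOn_pairVal, Ne.symm h₀, Ne.symm h₁]

lemma mbaRev_pairVal (hi : i₀ ≠ i₁) (ha : 0 ≤ a) (hc : 0 ≤ c) :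
    mbaRev (pairVal i₀ i₁ j₀ j₁ a) c
      = 2 * (a + c) - 2 * boostedMax (welfareOn (pairVal i₀ i₁ j₀ j₁ a) univ) c
        + welfareOn (pairVal i₀ i₁ j₀ j₁ a) univ
            (boostedArgmax (welfareOn (pairVal i₀ i₁ j₀ j₁ a) univ) c) := by
  rw [mbaRev_eq, Fintype.sum_eq_add i₀ i₁ hi fun k ⟨h₀, h₁⟩ => by
    rw [welfareOn_pairVal_erase_of_ne h₀ h₁, sub_self]]
  rw [boostedMax_pairVal_erase hi ha hc, pairVal_comm,
    boostedMax_pairVal_erase hi.symm ha hc, ← pairVal_comm]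
  ring

lemma mbaRev_pairVal_of_lt (hi : i₀ ≠ i₁) (hj : j₀ ≠ j₁) (hc : 0 ≤ c) (hca : c < a) :
    mbaRev (pairVal i₀ i₁ j₀ j₁ a) c = 2 * c := by
  have ha : 0 ≤ a := hc.trans hca.le
  set W := welfareOn (pairVal i₀ i₁ j₀ j₁ a) univ
  have hsplit : 2 * a ≤ boostedMax W c := by
    let o := Alloc.ofAssignment fun j => if j = j₀ then some i₀ else some i₁
    have hW : W o = 2 * a := by
      simp [o, W, welfareOn_pairVal, Alloc.mem_ofAssignment, hj.symm]
      ring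
    linarith [le_boostedMax W c o, mbaLam_nonneg hc o]
  have hmax := boostedMax_eq W c
  have hng : ¬ IsGrand (boostedArgmax W c) := fun hg => by
    rw [mbaLam_of_isGrand hg] at hmax
    linarith [welfare_pairVal_le_of_isGrand (j₀ := j₀) (j₁ := j₁) hi ha hg]
  rw [mbaLam_of_not_isGrand hng] at hmax
  rw [mbaRev_pairVal hi ha hc]
  linarith [welfare_pairVal_le (i₀ := i₀) (i₁ := i₁) (j₀ := j₀) (j₁ := j₁) ha
    (boostedArgmax W c)]

lemma mbaRev_pairVal_of_gt (hi : i₀ ≠ i₁) (ha : 0 ≤ a) (hac : a < c) :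
    mbaRev (pairVal i₀ i₁ j₀ j₁ a) c = a := by
  have hgrand := le_boostedMax (welfareOn (pairVal i₀ i₁ j₀ j₁ a) univ) c
    (Alloc.ofAssignment fun _ => some i₀)
  rw [welfareOn_pairVal_grand hi _ (Finset.mem_univ _),
    mbaLam_of_isGrand (isGrand_ofAssignment_const i₀)] at hgrand
  set W := welfareOn (pairVal i₀ i₁ j₀ j₁ a) univ
  have hmax := boostedMax_eq W c
  have hg : IsGrand (boostedArgmax W c) := by
    by_contra hng
    rw [mbaLam_of_not_isGrand hng] at hmax
    linarith [welfare_pairVal_le (i₀ := i₀) (i₁ := i₁) (j₀ := j₀) (j₁ := j₁) ha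
      (boostedArgmax W c)]
  rw [mbaLam_of_isGrand hg] at hmax
  rw [mbaRev_pairVal hi ha (ha.trans hac.le)]
  linarith [welfare_pairVal_le_of_isGrand (j₀ := j₀) (j₁ := j₁) hi ha hg]

lemma pairVal_apply_self (hi : i₀ ≠ i₁) : pairVal i₀ i₁ j₀ j₁ a i₀ {j₀} = a := by
  simp [pairVal, hi]

lemma pairVal_isValNN (ha : 0 ≤ a) :
    (∀ i, pairVal i₀ i₁ j₀ j₁ a i ∅ = 0) ∧ ∀ i b, 0 ≤ pairVal i₀ i₁ j₀ j₁ a i b :=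
  ⟨fun i => by simp [pairVal], fun i b => by unfold pairVal; split_ifs <;> linarith⟩

theorem exists_pShatters_pairVal (hi : i₀ ≠ i₁) (hj : j₀ ≠ j₁) :
    ∃ x : Fin 2 → ValNN n m, Function.Injective x ∧ PShatters (mbaClass n m) x := by
  let x : Fin 2 → ValNN n m := fun k =>
    ⟨pairVal i₀ i₁ j₀ j₁ (k + 1), pairVal_isValNN (by positivity)⟩
  refine ⟨x, fun k l hkl => Fin.ext ?_, pShatters_of_forall_iff ![1, 3 / 2] fun T => ?_⟩
  · simpa only [x, pairVal_apply_self hi, add_left_inj, Nat.cast_inj] using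
      congrArg (fun v : ValNN n m => v.1 i₀ {j₀}) hkl
  obtain ⟨c, hc, h₀, h₁⟩ : ∃ c : ℝ, 0 ≤ c ∧
      (mbaRev (pairVal i₀ i₁ j₀ j₁ 1) c ≤ 1 ↔ 0 ∈ T) ∧
      (mbaRev (pairVal i₀ i₁ j₀ j₁ 2) c ≤ 3 / 2 ↔ 1 ∈ T) := by
    by_cases hT₀ : 0 ∈ T <;> by_cases hT₁ : 1 ∈ T
    · refine ⟨0, le_rfl, ?_⟩
      rw [mbaRev_pairVal_of_lt hi hj le_rfl (by norm_num),
        mbaRev_pairVal_of_lt hi hj le_rfl (by norm_num)]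
      norm_num [hT₀, hT₁]
    · refine ⟨3 / 2, by norm_num, ?_⟩
      rw [mbaRev_pairVal_of_gt hi (by norm_num) (by norm_num),
        mbaRev_pairVal_of_lt hi hj (by norm_num) (by norm_num)]
      norm_num [hT₀, hT₁]
    · refine ⟨3 / 4, by norm_num, ?_⟩
      rw [mbaRev_pairVal_of_lt hi hj (by norm_num) (by norm_num),
        mbaRev_pairVal_of_lt hi hj (by norm_num) (by norm_num)]
      norm_num [hT₀, hT₁]
    · refine ⟨9 / 10, by norm_num, ?_⟩
      rw [mbaRev_pairVal_of_lt hi hj (by norm_num) (by norm_num),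
        mbaRev_pairVal_of_lt hi hj (by norm_num) (by norm_num)]
      norm_num [hT₀, hT₁]
  refine ⟨fun v => mbaRev v.1 c, ⟨c, hc, rfl⟩, fun i => ?_⟩
  fin_cases i
  · simpa [x] using h₀
  · simpa [x, one_add_one_eq_two] using h₁

end PairValuation

/-- The pseudo-dimension of the class of `n`-bidder, `m`-item
MBA revenue functions equals `2`: no set of three valuation vectors is
pseudo-shattered, and some set of two valuation vectors is pseudo-shattered. -/
theorem stmt17 (n m : ℕ) (hn : 2 ≤ n) (hm : 2 ≤ m) :
    (∀ x : Fin 3 → ValNN n m, Function.Injective x → ¬ PShatters (mbaClass n m) x) ∧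
    (∃ x : Fin 2 → ValNN n m, Function.Injective x ∧ PShatters (mbaClass n m) x) := by
  refine ⟨fun x _ => not_pShatters_mbaClass x, ?_⟩
  obtain ⟨i₀, i₁, hi⟩ := (Fin.nontrivial_iff_two_le.2 hn).exists_pair_ne
  obtain ⟨j₀, j₁, hj⟩ := (Fin.nontrivial_iff_two_le.2 hm).exists_pair_ne
  exact exists_pShatters_pairVal hi hj
end
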